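/- Fix a nonzero complex number ℏ and complex numbers δ, δ′, c, and on holomorphic functions f of (u,v) ∈ ℂ² define the first-order differential operators L_u f = u f + (iℏ/2)(δ ∂_u f + (c−1) ∂_v f), L_v f = v f + (iℏ/2)((c+1) ∂_u f + δ′ ∂_v f), R_u f = u f + (iℏ/2)(δ ∂_u f + (c+1) ∂_v f), R_v f = v f + (iℏ/2)((c−1) ∂_u f + δ′ ∂_v f). Assume (1+c)² ≠ δδ′ and (1−c)² ≠ δδ′ and set ϖ₀₀(u,v) = exp( (1/(iℏ))·(δ′u² − 2(1+c)uv + δv²)/((1+c)² − δδ′) ) and ϖ̄₀₀(u,v) = exp( (1/(iℏ))·(δ′u² + 2(1−c)uv + δv²)/((1−c)² − δδ′) ). Then L_v ϖ₀₀ = 0, R_u ϖ₀₀ = 0, L_u ϖ̄₀₀ = 0 and R_v ϖ̄₀₀ = 0. -/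

import Mathlib

/-!
Both functions are Gaussians `exp (xᵀ A x)` in `x = (u, v)`, with `A = -(iℏ)⁻¹ (K + σ)⁻¹` for
`ϖ₀₀` and `A = -(iℏ)⁻¹ (K - σ)⁻¹` for `ϖ̄₀₀`, where `σ = [[0, 1], [1, 0]]`; the hypotheses on `c`
say exactly that `K ± σ` is invertible. Each of the four operators is `x_j + (iℏ/2) (M ∇)_j` with
`M = K + σ` (for `L_v`, `R_u`) or `M = K - σ` (for `L_u`, `R_v`). Since
`∇ exp (xᵀ A x) = 2 A x exp (xᵀ A x)`, it sends the Gaussian to `(x + iℏ M A x)_j exp (xᵀ A x)`,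
which vanishes because `M A = -(iℏ)⁻¹`.
-/

open Complex

/-- `K`-ordered expression of left ∗-multiplication by `u`. -/
noncomputable def Lu (ℏ δ δ' c : ℂ) (f : ℂ → ℂ → ℂ) (u v : ℂ) : ℂ :=
  u * f u v + (Complex.I * ℏ / 2) *
    (δ * deriv (fun x => f x v) u + (c - 1) * deriv (fun y => f u y) v)

/-- `K`-ordered expression of left ∗-multiplication by `v`. -/
noncomputable def Lv (ℏ δ δ' c : ℂ) (f : ℂ → ℂ → ℂ) (u v : ℂ) : ℂ :=
  v * f u v + (Complex.I * ℏ / 2) *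
    ((c + 1) * deriv (fun x => f x v) u + δ' * deriv (fun y => f u y) v)

/-- `K`-ordered expression of right ∗-multiplication by `u`. -/
noncomputable def Ru (ℏ δ δ' c : ℂ) (f : ℂ → ℂ → ℂ) (u v : ℂ) : ℂ :=
  u * f u v + (Complex.I * ℏ / 2) *
    (δ * deriv (fun x => f x v) u + (c + 1) * deriv (fun y => f u y) v)

/-- `K`-ordered expression of right ∗-multiplication by `v`. -/
noncomputable def Rv (ℏ δ δ' c : ℂ) (f : ℂ → ℂ → ℂ) (u v : ℂ) : ℂ :=
  v * f u v + (Complex.I * ℏ / 2) *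
    ((c - 1) * deriv (fun x => f x v) u + δ' * deriv (fun y => f u y) v)

noncomputable def expQuadForm (a b d : ℂ) (u v : ℂ) : ℂ :=
  exp (a * u ^ 2 + 2 * b * u * v + d * v ^ 2)

section expQuadForm

variable (a b d u v : ℂ)

lemma expQuadForm_swap : expQuadForm a b d u v = expQuadForm d b a v u := by
  unfold expQuadForm
  congr 1
  ring

lemma hasDerivAt_expQuadForm_fst :
    HasDerivAt (fun x => expQuadForm a b d x v)
      (2 * (a * u + b * v) * expQuadForm a b d u v) u := by
  have hQ : HasDerivAt (fun x : ℂ => a * x ^ 2 + 2 * b * x * v + d * v ^ 2)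
      (2 * (a * u + b * v)) u := by
    refine ((((hasDerivAt_pow 2 u).const_mul a).add
      (((hasDerivAt_id' u).const_mul (2 * b)).mul_const v)).add_const
        (d * v ^ 2)).congr_deriv ?_
    norm_num
    ring
  simpa only [expQuadForm, mul_comm] using hQ.cexp

lemma deriv_expQuadForm_fst :
    deriv (fun x => expQuadForm a b d x v) u = 2 * (a * u + b * v) * expQuadForm a b d u v :=
  (hasDerivAt_expQuadForm_fst a b d u v).deriv

lemma deriv_expQuadForm_snd :
    deriv (fun y => expQuadForm a b d u y) v = 2 * (b * u + d * v) * expQuadForm a b d u v := by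
  have hswap : (fun y => expQuadForm a b d u y) = fun y => expQuadForm d b a y u :=
    funext (expQuadForm_swap a b d u)
  rw [hswap, deriv_expQuadForm_fst, expQuadForm_swap d]
  ring

lemma mul_add_deriv_expQuadForm (p κ α β : ℂ) :
    p * expQuadForm a b d u v + κ * (α * deriv (fun x => expQuadForm a b d x v) u
      + β * deriv (fun y => expQuadForm a b d u y) v)
      = (p + 2 * κ * (α * (a * u + b * v) + β * (b * u + d * v))) * expQuadForm a b d u v := by
  rw [deriv_expQuadForm_fst, deriv_expQuadForm_snd]
  ring

end expQuadForm

/-- For the `K`-ordered expressions `ϖ₀₀` and `ϖ̄₀₀` of the vacuum and bar-vacuum,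
one has `v∗ϖ₀₀ = 0 = ϖ₀₀∗u` and `u∗ϖ̄₀₀ = 0 = ϖ̄₀₀∗v` in the `K`-ordered expression:
`L_v ϖ₀₀ = 0`, `R_u ϖ₀₀ = 0`, `L_u ϖ̄₀₀ = 0`, `R_v ϖ̄₀₀ = 0`. -/
theorem statement6 (ℏ δ δ' c : ℂ) (hℏ : ℏ ≠ 0)
    (h1 : (1 + c) ^ 2 ≠ δ * δ') (h2 : (1 - c) ^ 2 ≠ δ * δ')
    (ϖ ϖbar : ℂ → ℂ → ℂ)
    (hϖ : ∀ u v, ϖ u v = exp ((1 / (Complex.I * ℏ)) *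
      (δ' * u ^ 2 - 2 * (1 + c) * u * v + δ * v ^ 2) / ((1 + c) ^ 2 - δ * δ')))
    (hϖbar : ∀ u v, ϖbar u v = exp ((1 / (Complex.I * ℏ)) *
      (δ' * u ^ 2 + 2 * (1 - c) * u * v + δ * v ^ 2) / ((1 - c) ^ 2 - δ * δ'))) :
    (∀ u v : ℂ, Lv ℏ δ δ' c ϖ u v = 0) ∧
    (∀ u v : ℂ, Ru ℏ δ δ' c ϖ u v = 0) ∧
    (∀ u v : ℂ, Lu ℏ δ δ' c ϖbar u v = 0) ∧
    (∀ u v : ℂ, Rv ℏ δ δ' c ϖbar u v = 0) := by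
  have hD₁ : (1 + c) ^ 2 - δ' * δ ≠ 0 := sub_ne_zero.mpr (mul_comm δ δ' ▸ h1)
  have hD₂ : (1 - c) ^ 2 - δ' * δ ≠ 0 := sub_ne_zero.mpr (mul_comm δ δ' ▸ h2)
  obtain rfl : ϖ = expQuadForm (δ' / (I * ℏ * ((1 + c) ^ 2 - δ * δ')))
      (-(1 + c) / (I * ℏ * ((1 + c) ^ 2 - δ * δ'))) (δ / (I * ℏ * ((1 + c) ^ 2 - δ * δ'))) := by
    funext u v
    rw [hϖ, expQuadForm]
    congr 1
    field_simp
    ring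
  obtain rfl : ϖbar = expQuadForm (δ' / (I * ℏ * ((1 - c) ^ 2 - δ * δ')))
      ((1 - c) / (I * ℏ * ((1 - c) ^ 2 - δ * δ'))) (δ / (I * ℏ * ((1 - c) ^ 2 - δ * δ'))) := by
    funext u v
    rw [hϖbar, expQuadForm]
    congr 1
    field_simp
  refine ⟨fun u v => ?_, fun u v => ?_, fun u v => ?_, fun u v => ?_⟩
  all_goals
    simp only [Lv, Ru, Lu, Rv, mul_add_deriv_expQuadForm]
    refine mul_eq_zero_of_left ?_ _
    field_simp
    ring
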